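/- arXiv:2403.17282 — 2 statements merged into one kernel-verified Lean document; each statement's English description precedes it below -/
import Mathlib

section
/- A small constellation Q is a D-inverse constellation if and only if it is isomorphic (as a constellation closed under D-inverses) to an inverse subconstellation of the constellation I_Q of injective partial functions on the set Q. -/
open scoped Classical

/-- A constellation: a partial binary operation (encoded via `Option`) together with a
domain operation `D`, satisfying (Const1), (Const2) and (Const3). -/
structure Constellation (Q : Type*) where
  mul : Q → Q → Option Q
  D : Q → Q
  const1 : ∀ x y z w v, mul y z = some w → mul x w = some v →
    ∃ u, mul x y = some u ∧ mul u z = some v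
  const2 : ∀ x y z u v, mul x y = some u → mul y z = some v → (mul x v).isSome
  D_mul : ∀ x, mul (D x) x = some x
  D_ri : ∀ x s t, mul s (D x) = some t → t = s
  D_unique : ∀ x e, (∀ s t, mul s e = some t → t = s) → mul e x = some x → e = D x

namespace Constellation
variable {Q : Type*} (C : Constellation Q)

/-- `e` is a projection, i.e. an element of `D(Q)`. -/
def IsProj (e : Q) : Prop := ∃ s, e = C.D s

/-- `e` is a right identity. -/
def IsRightId (e : Q) : Prop := ∀ s t, C.mul s e = some t → t = s

/-- `e` is an idempotent. -/
def Idem (e : Q) : Prop := C.mul e e = some e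

/-- D-regularity: every `a` has some `b` with `a·b = D(a)`. -/
def DRegular : Prop := ∀ a, ∃ b, C.mul a b = some (C.D a)

/-- Normality: projections `e`, `f` with `e·f` and `f·e` both existing are equal. -/
def Normal : Prop := ∀ e f, C.IsProj e → C.IsProj f →
  (C.mul e f).isSome → (C.mul f e).isSome → e = f

/-- `t` is a D-inverse of `s`. -/
def IsDInv (s t : Q) : Prop := C.mul s t = some (C.D s) ∧ C.mul t s = some (C.D t)

/-- A D-inverse constellation: every element has a unique D-inverse. -/
def DInverse : Prop := ∀ s, ∃! t, C.IsDInv s t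

/-- Right cancellativity. -/
def RightCancellative : Prop := ∀ a b c x, C.mul a c = some x → C.mul b c = some x → a = b

end Constellation

/-- Injective partial functions on `X` (the carrier of the constellation `I_X`). -/
def PInj (X : Type*) := {f : X → Option X // ∀ a b c, f a = some c → f b = some c → a = b}

/-- The product in `I_X`: `s·t` is the composite (first `s`, then `t`), defined exactly
when the image of `s` is contained in the domain of `t`. -/
noncomputable def PInj.mul {X : Type*} (s t : PInj X) : Option (PInj X) :=
  if h : ∀ a y, s.1 a = some y → (t.1 y).isSome
  then some ⟨fun a => (s.1 a).bind t.1, by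
    intro a b c hac hbc
    rcases Option.bind_eq_some_iff.mp hac with ⟨y1, hy1, hy1'⟩
    rcases Option.bind_eq_some_iff.mp hbc with ⟨y2, hy2, hy2'⟩
    have hy : y1 = y2 := t.2 _ _ _ hy1' hy2'
    subst hy
    exact s.2 _ _ _ hy1 hy2⟩
  else none

/-- The domain operation in `I_X`: the identity map restricted to the domain of `s`. -/
noncomputable def PInj.D {X : Type*} (s : PInj X) : PInj X :=
  ⟨fun a => if (s.1 a).isSome then some a else none, by
    intro a b c ha hb
    have h1 : a = c := by
      by_cases h : (s.1 a).isSome <;> simp [h] at ha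
      exact ha
    have h2 : b = c := by
      by_cases h : (s.1 b).isSome <;> simp [h] at hb
      exact hb
    exact h1.trans h2.symm⟩

/-- The inverse of an injective partial function, as an injective partial function. -/
noncomputable def PInj.inv {X : Type*} (s : PInj X) : PInj X :=
  ⟨fun y => if h : ∃ a, s.1 a = some y then some h.choose else none, by
    intro a b c ha hb
    have h1 : s.1 c = some a := by
      by_cases h : ∃ x, s.1 x = some a
      · simp [h] at ha; rw [← ha]; exact h.choose_spec
      · simp [h] at ha
    have h2 : s.1 c = some b := by
      by_cases h : ∃ x, s.1 x = some b
      · simp [h] at hb; rw [← hb]; exact h.choose_spec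
      · simp [h] at hb
    rw [h1] at h2; exact Option.some_injective _ h2⟩

/-!
A D-inverse constellation acts on itself by right multiplication, `s ↦ (a ↦ a·s)`. If `t` is a
D-inverse of `s`, then `a·s = y` iff `y·t = a` (associate `a·s·t` through `s·t = D(s)`), so the
action of `s` is an injective partial map whose inverse is the action of `t`; uniqueness of
D-inverses makes the action faithful. Conversely, in `I_X` the D-inverses are exactly the inverse
partial bijections, and a strong injective radiant carries this characterisation back to `Q`.
-/

namespace PInj
variable {X : Type*}

lemma ext {f g : PInj X} (h : ∀ a, f.1 a = g.1 a) : f = g :=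
  Subtype.ext (funext h)

lemma D_apply (f : PInj X) (a : X) :
    (PInj.D f).1 a = if (f.1 a).isSome then some a else none := rfl

lemma mul_eq_some_iff {f g u : PInj X} :
    PInj.mul f g = some u ↔
      (∀ a y, f.1 a = some y → (g.1 y).isSome) ∧ ∀ a, u.1 a = (f.1 a).bind g.1 := by
  by_cases hc : ∀ a y, f.1 a = some y → (g.1 y).isSome
  · rw [PInj.mul, dif_pos hc]
    refine ⟨fun h => ⟨hc, fun a => ?_⟩, fun h => congrArg some (ext fun a => (h.2 a).symm)⟩
    cases h
    rfl
  · rw [PInj.mul, dif_neg hc]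
    exact ⟨nofun, fun h => (hc h.1).elim⟩

lemma isSome_mul_iff {f g : PInj X} :
    (PInj.mul f g).isSome ↔ ∀ a y, f.1 a = some y → (g.1 y).isSome := by
  by_cases hc : ∀ a y, f.1 a = some y → (g.1 y).isSome
  · rw [PInj.mul, dif_pos hc]
    exact ⟨fun _ => hc, fun _ => rfl⟩
  · rw [PInj.mul, dif_neg hc]
    exact ⟨nofun, fun h => (hc h).elim⟩

lemma apply_eq_some_of_mul_eq_D {f g : PInj X} (h : PInj.mul f g = some (PInj.D f)) {a y : X}
    (hfa : f.1 a = some y) : g.1 y = some a := by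
  simpa [D_apply, hfa] using ((mul_eq_some_iff.mp h).2 a).symm

lemma inv_apply_eq_some_iff (f : PInj X) {a y : X} :
    (PInj.inv f).1 y = some a ↔ f.1 a = some y := by
  show (if h : ∃ b, f.1 b = some y then some h.choose else none) = some a ↔ _
  split_ifs with he
  · exact ⟨fun h => Option.some.inj h ▸ he.choose_spec,
      fun h => congrArg some (f.2 _ _ _ he.choose_spec h)⟩
  · exact ⟨nofun, fun h => (he ⟨a, h⟩).elim⟩

lemma eq_inv_iff {f g : PInj X} : g = PInj.inv f ↔ ∀ a y, g.1 y = some a ↔ f.1 a = some y := by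
  refine ⟨fun h a y => h ▸ inv_apply_eq_some_iff f, fun h => ext fun y => Option.ext fun a => ?_⟩
  rw [h, inv_apply_eq_some_iff]

lemma inv_inv (f : PInj X) : PInj.inv (PInj.inv f) = f :=
  (eq_inv_iff.mpr fun _ _ => (inv_apply_eq_some_iff f).symm).symm

lemma mul_inv (f : PInj X) : PInj.mul f (PInj.inv f) = some (PInj.D f) := by
  refine mul_eq_some_iff.mpr ⟨fun a y h => ?_, fun a => ?_⟩
  · simp [(inv_apply_eq_some_iff f).mpr h]
  · rcases hfa : f.1 a with _ | y
    · simp [D_apply, hfa]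
    · simp [D_apply, hfa, (inv_apply_eq_some_iff f).mpr hfa]

lemma inv_mul (f : PInj X) : PInj.mul (PInj.inv f) f = some (PInj.D (PInj.inv f)) := by
  simpa only [inv_inv] using mul_inv (PInj.inv f)

lemma eq_inv_of_mul_eq_D {f g : PInj X} (hfg : PInj.mul f g = some (PInj.D f))
    (hgf : PInj.mul g f = some (PInj.D g)) : g = PInj.inv f :=
  eq_inv_iff.mpr fun _ _ =>
    ⟨apply_eq_some_of_mul_eq_D hgf, apply_eq_some_of_mul_eq_D hfg⟩

end PInj

namespace Constellation
variable {Q : Type*} {C : Constellation Q} {a s t u y : Q}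

lemma mul_D_of_isSome (h : (C.mul a (C.D s)).isSome) : C.mul a (C.D s) = some a := by
  obtain ⟨w, hw⟩ := Option.isSome_iff_exists.mp h
  rw [hw, C.D_ri s a w hw]

lemma isSome_mul_of_isSome_mul_D (h : (C.mul a (C.D s)).isSome) : (C.mul a s).isSome :=
  C.const2 a (C.D s) s a s (mul_D_of_isSome h) (C.D_mul s)

lemma mul_mul_eq_of_mul_eq (hst : C.mul s t = some u) (has : C.mul a s = some y) :
    C.mul y t = C.mul a u := by
  obtain ⟨v, hv⟩ := Option.isSome_iff_exists.mp (C.const2 a s t y u has hst)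
  obtain ⟨y', hy', hy't⟩ := C.const1 a s t u v hst hv
  rw [hv, ← hy't, ← Option.some.inj (has.symm.trans hy')]

lemma mul_eq_none_of_mul_eq_none (hst : C.mul s t = some u) (has : C.mul a s = none) :
    C.mul a u = none := by
  rcases hv : C.mul a u with _ | v
  · rfl
  · obtain ⟨_, hy, -⟩ := C.const1 a s t u v hst hv
    simp [has] at hy

lemma bind_mul_eq_of_mul_eq (hst : C.mul s t = some u) :
    (C.mul a s).bind (C.mul · t) = C.mul a u := by
  rcases has : C.mul a s with _ | y
  · exact (mul_eq_none_of_mul_eq_none hst has).symm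
  · exact mul_mul_eq_of_mul_eq hst has

lemma IsDInv.symm (h : C.IsDInv s t) : C.IsDInv t s :=
  And.symm h

lemma IsDInv.mul_D_eq (h : C.IsDInv s t) :
    C.mul a (C.D s) = if (C.mul a s).isSome then some a else none := by
  split_ifs with has
  · obtain ⟨y, hy⟩ := Option.isSome_iff_exists.mp has
    exact mul_D_of_isSome (C.const2 a s t y _ hy h.1)
  · rw [← Option.not_isSome_iff_eq_none]
    exact fun h' => has (isSome_mul_of_isSome_mul_D h')

lemma IsDInv.mul_eq_of_mul_eq (h : C.IsDInv s t) (has : C.mul a s = some y) :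
    C.mul y t = some a := by
  rw [mul_mul_eq_of_mul_eq h.1 has, h.mul_D_eq, if_pos (by simp [has])]

section radiant
variable {X : Type*} {ρ : Q → PInj X}

lemma rep_eq_inv_of_isDInv
    (hmul : ∀ s t u, C.mul s t = some u → PInj.mul (ρ s) (ρ t) = some (ρ u))
    (hD : ∀ s, PInj.D (ρ s) = ρ (C.D s)) (h : C.IsDInv s t) : ρ t = PInj.inv (ρ s) :=
  PInj.eq_inv_of_mul_eq_D (by rw [hD, hmul s t _ h.1]) (by rw [hD, hmul t s _ h.2])

lemma mul_eq_of_rep_mul_eq (hinj : Function.Injective ρ)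
    (hmul : ∀ s t u, C.mul s t = some u → PInj.mul (ρ s) (ρ t) = some (ρ u))
    (hrefl : ∀ s t, (PInj.mul (ρ s) (ρ t)).isSome → (C.mul s t).isSome)
    (h : PInj.mul (ρ s) (ρ t) = some (ρ u)) : C.mul s t = some u := by
  obtain ⟨v, hv⟩ := Option.isSome_iff_exists.mp (hrefl s t (by simp [h]))
  rw [hv, hinj (Option.some.inj ((hmul s t v hv).symm.trans h))]

lemma isDInv_of_rep_eq_inv (hinj : Function.Injective ρ)
    (hmul : ∀ s t u, C.mul s t = some u → PInj.mul (ρ s) (ρ t) = some (ρ u))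
    (hD : ∀ s, PInj.D (ρ s) = ρ (C.D s))
    (hrefl : ∀ s t, (PInj.mul (ρ s) (ρ t)).isSome → (C.mul s t).isSome)
    (h : ρ t = PInj.inv (ρ s)) : C.IsDInv s t :=
  ⟨mul_eq_of_rep_mul_eq hinj hmul hrefl (by rw [h, PInj.mul_inv, hD]),
    mul_eq_of_rep_mul_eq hinj hmul hrefl (by rw [h, PInj.inv_mul, ← h, hD])⟩

end radiant

def rightRep (hC : ∀ s, ∃ t, C.IsDInv s t) (s : Q) : PInj Q :=
  ⟨fun a => C.mul a s, fun a b c ha hb => by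
    obtain ⟨t, ht⟩ := hC s
    exact Option.some.inj ((ht.mul_eq_of_mul_eq ha).symm.trans (ht.mul_eq_of_mul_eq hb))⟩

section rightRep
variable (hC : ∀ s, ∃ t, C.IsDInv s t)

lemma rightRep_apply (s a : Q) : (C.rightRep hC s).1 a = C.mul a s := rfl

lemma rightRep_mul (hst : C.mul s t = some u) :
    PInj.mul (C.rightRep hC s) (C.rightRep hC t) = some (C.rightRep hC u) := by
  refine PInj.mul_eq_some_iff.mpr ⟨fun a y has => ?_, fun a => (bind_mul_eq_of_mul_eq hst).symm⟩
  obtain ⟨v, hv⟩ := Option.isSome_iff_exists.mp (C.const2 a s t y u has hst)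
  simp [rightRep_apply, mul_mul_eq_of_mul_eq hst has, hv]

lemma rightRep_D (s : Q) : PInj.D (C.rightRep hC s) = C.rightRep hC (C.D s) := by
  obtain ⟨t, ht⟩ := hC s
  exact PInj.ext fun a => ht.mul_D_eq.symm

lemma isSome_mul_of_isSome_rightRep_mul
    (h : (PInj.mul (C.rightRep hC s) (C.rightRep hC t)).isSome) : (C.mul s t).isSome :=
  PInj.isSome_mul_iff.mp h (C.D s) s (C.D_mul s)

lemma rightRep_eq_inv (h : C.IsDInv s t) : C.rightRep hC t = PInj.inv (C.rightRep hC s) :=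
  rep_eq_inv_of_isDInv (fun _ _ _ => rightRep_mul hC) (rightRep_D hC) h

end rightRep

lemma rightRep_injective (hC : C.DInverse) :
    Function.Injective (C.rightRep fun s => (hC s).exists) := by
  intro s t hst
  have hmul : ∀ a, C.mul a s = C.mul a t := fun a => congrFun (congrArg Subtype.val hst) a
  obtain ⟨s', hs'⟩ := (hC s).exists
  obtain ⟨t', ht'⟩ := (hC t).exists
  have hDs : C.mul (C.D s) t = some s := by rw [← hmul]; exact C.D_mul s
  have ht's : C.IsDInv s t' := ⟨ht'.mul_eq_of_mul_eq hDs, by rw [hmul]; exact ht'.2⟩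
  have : t' = s' := (hC s).unique ht's hs'
  subst this
  exact (hC t').unique hs'.symm ht'.symm

end Constellation

open Constellation

/-- A small constellation `Q` is D-inverse iff it is isomorphic (via a strong injective
radiant whose image is closed under inverses) to an inverse subconstellation of the
constellation `I_Q` of injective partial functions on `Q`. -/
theorem dInverse_iff_inverse_subconstellation_of_IQ {Q : Type*} (C : Constellation Q) :
    C.DInverse ↔
    ∃ ρ : Q → PInj Q, Function.Injective ρ ∧
      (∀ s t u, C.mul s t = some u → PInj.mul (ρ s) (ρ t) = some (ρ u)) ∧
      (∀ s, PInj.D (ρ s) = ρ (C.D s)) ∧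
      (∀ s t, (PInj.mul (ρ s) (ρ t)).isSome → (C.mul s t).isSome) ∧
      (∀ s, ∃ t, ρ t = PInj.inv (ρ s)) := by
  constructor
  · intro hC
    have hex : ∀ s, ∃ t, C.IsDInv s t := fun s => (hC s).exists
    exact ⟨C.rightRep hex, rightRep_injective hC, fun _ _ _ => rightRep_mul hex, rightRep_D hex,
      fun _ _ => isSome_mul_of_isSome_rightRep_mul hex,
      fun s => (hex s).imp fun _ => rightRep_eq_inv hex⟩
  · rintro ⟨ρ, hinj, hmul, hD, hrefl, hinv⟩ s
    obtain ⟨t, ht⟩ := hinv s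
    exact ⟨t, isDInv_of_rep_eq_inv hinj hmul hD hrefl ht,
      fun y hy => hinj ((rep_eq_inv_of_isDInv hmul hD hy).trans ht.symm)⟩
end

section
/- Every D-regular constellation with range is a D-inverse constellation, and R(s) = D(s') for all s, where s' is the D-inverse of s. -/
open scoped Classical

/-- `e ∈ s_D`: `e` is a projection, `s·e` exists, and `e ≤ f` (i.e. `e·f` exists)
for every projection `f` such that `s·f` exists. -/
def Constellation.InSD {Q : Type*} (C : Constellation Q) (s e : Q) : Prop :=
  C.IsProj e ∧ (C.mul s e).isSome ∧
    ∀ f, C.IsProj f → (C.mul s f).isSome → (C.mul e f).isSome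


namespace Constellation

variable {Q : Type*} {C : Constellation Q}

lemma mul_proj {s e t : Q} (he : C.IsProj e) (h : C.mul s e = some t) : t = s := by
  obtain ⟨x, rfl⟩ := he; exact C.D_ri x s t h

lemma D_idem (x : Q) : C.mul (C.D x) (C.D x) = some (C.D x) := by
  obtain ⟨u, h1, h2⟩ := C.const1 (C.D x) (C.D x) x x x (C.D_mul x) (C.D_mul x)
  have := C.D_ri x _ _ h1
  subst this
  exact h1

lemma D_D (x : Q) : C.D (C.D x) = C.D x :=
  (C.D_unique (C.D x) (C.D x) (fun s t h => C.D_ri x s t h) (D_idem x)).symm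

lemma proj_idem {e : Q} (he : C.IsProj e) : C.mul e e = some e := by
  obtain ⟨x, rfl⟩ := he; exact D_idem x

lemma D_proj {e : Q} (he : C.IsProj e) : C.D e = e := by
  obtain ⟨x, rfl⟩ := he; exact D_D x

lemma D_mul_left {s t u : Q} (h : C.mul s t = some u) : C.D u = C.D s := by
  have h2 : (C.mul (C.D s) u).isSome := C.const2 (C.D s) s t s u (C.D_mul s) h
  obtain ⟨v, hv⟩ := Option.isSome_iff_exists.mp h2
  obtain ⟨u', h3, h4⟩ := C.const1 (C.D s) s t u v h hv
  rw [C.D_mul s] at h3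
  injection h3 with h3; subst h3
  rw [h] at h4; injection h4 with h4; subst h4
  exact (C.D_unique u (C.D s) (fun a b hab => C.D_ri s a b hab) hv).symm

/-- If `s·t` exists then `s·D(t) = s`. -/
lemma mul_D_right {s t u : Q} (h : C.mul s t = some u) : C.mul s (C.D t) = some s := by
  obtain ⟨u', h1, h2⟩ := C.const1 s (C.D t) t t u (C.D_mul t) h
  have := C.D_ri t _ _ h1
  subst this
  exact h1

section Range

variable {R : Q → Q} (hR : ∀ s, {e | C.InSD s e} = {R s})

include hR

lemma inSD_R (s : Q) : C.InSD s (R s) := (Set.ext_iff.mp (hR s) (R s)).mpr rfl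

lemma eq_R_of_inSD {s e : Q} (h : C.InSD s e) : e = R s := (Set.ext_iff.mp (hR s) e).mp h

lemma R_proj (s : Q) : C.IsProj (R s) := (inSD_R hR s).1

lemma mul_R (s : Q) : C.mul s (R s) = some s := by
  obtain ⟨t, ht⟩ := Option.isSome_iff_exists.mp (inSD_R hR s).2.1
  have := mul_proj (R_proj hR s) ht
  subst this; exact ht

lemma mul_R_isSome {s f : Q} (hf : C.IsProj f) (h : (C.mul s f).isSome) :
    (C.mul (R s) f).isSome := (inSD_R hR s).2.2 f hf h

lemma R_of_proj {e : Q} (he : C.IsProj e) : R e = e := by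
  refine (eq_R_of_inSD hR ⟨he, ?_, fun f _ hef => hef⟩).symm
  rw [proj_idem he]; rfl

lemma range_normal {e f : Q} (he : C.IsProj e) (hf : C.IsProj f)
    (hef : (C.mul e f).isSome) (hfe : (C.mul f e).isSome) : e = f := by
  have key : C.InSD f e := by
    refine ⟨he, hfe, fun g hg hfg => ?_⟩
    have hw : C.mul f g = some f := by
      obtain ⟨w, hw⟩ := Option.isSome_iff_exists.mp hfg
      rwa [mul_proj hg hw] at hw
    have hv : C.mul e f = some e := by
      obtain ⟨v, hv⟩ := Option.isSome_iff_exists.mp hef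
      rwa [mul_proj hf hv] at hv
    obtain ⟨u, h1, h2⟩ := C.const1 e f g f e hw hv
    rw [hv] at h1; injection h1 with h1; subst h1
    rw [h2]; rfl
  rw [eq_R_of_inSD hR key, R_of_proj hR hf]

end Range

/-- A D-regular constellation is right cancellative. -/
lemma dRegular_rightCancellative (hreg : C.DRegular) : C.RightCancellative := by
  intro a b c x hac hbc
  obtain ⟨e, he⟩ := hreg c
  have key : ∀ y, C.mul y c = some x → C.mul x e = some y := by
    intro y hyc
    have h1 : (C.mul y (C.D c)).isSome := C.const2 y c e x (C.D c) hyc he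
    have hv : C.mul y (C.D c) = some y := by
      obtain ⟨v, hv⟩ := Option.isSome_iff_exists.mp h1
      rwa [C.D_ri c _ _ hv] at hv
    obtain ⟨u, h2, h3⟩ := C.const1 y c e (C.D c) y he hv
    rw [hyc] at h2; injection h2 with h2; subst h2
    exact h3
  have h1 := key a hac
  have h2 := key b hbc
  rw [h1] at h2; injection h2

end Constellation

/-- Every D-regular constellation with range is a D-inverse constellation, and
`R(s) = D(s')` where `s'` is the D-inverse of `s`. -/
theorem dRegular_with_range_is_dInverse {Q : Type*} (C : Constellation Q) (R : Q → Q)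
    (hR : ∀ s, {e | C.InSD s e} = {R s})
    (hcong : ∀ s t u w, C.mul s t = some u → C.mul (R s) t = some w → R u = R w)
    (hreg : C.DRegular) :
    C.DInverse ∧ (∀ s t, C.IsDInv s t → R s = C.D t) := by
  classical
  -- For any D-inverse t of a, we have D t = R a.
  have hDinv_eq : ∀ a t, C.IsDInv a t → C.D t = R a := by
    intro a t ⟨hat, hta⟩
    -- D t · R a exists
    have h1 : (C.mul (C.D t) (R a)).isSome := by
      obtain ⟨u, h2, h3⟩ := C.const1 t a (R a) a (C.D t)
        (Constellation.mul_R hR a) hta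
      rw [hta] at h2; injection h2 with h2; subst h2
      rw [h3]; rfl
    -- R a · D t exists
    have h2 : (C.mul (R a) (C.D t)).isSome := by
      apply Constellation.mul_R_isSome hR ⟨t, rfl⟩
      rw [Constellation.mul_D_right hat]; rfl
    exact Constellation.range_normal hR ⟨t, rfl⟩ (Constellation.R_proj hR a) h1 h2
  have hcanc := Constellation.dRegular_rightCancellative hreg
  -- Existence of a D-inverse
  have hex : ∀ a, ∃ c, C.IsDInv a c := by
    intro a
    obtain ⟨b, hab⟩ := hreg a
    -- a · D b = a
    have h1 : C.mul a (C.D b) = some a := Constellation.mul_D_right hab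
    -- R a · D b = R a
    have h2 : C.mul (R a) (C.D b) = some (R a) := by
      have := Constellation.mul_R_isSome hR (C := C) ⟨b, rfl⟩ (s := a)
        (by rw [h1]; rfl)
      obtain ⟨v, hv⟩ := Option.isSome_iff_exists.mp this
      have := Constellation.mul_proj (C := C) ⟨b, rfl⟩ hv
      subst this; exact hv
    -- c := R a · b exists
    obtain ⟨c, hc⟩ := Option.isSome_iff_exists.mp
      (C.const2 (R a) (C.D b) b (R a) b h2 (C.D_mul b))
    -- a · c = D a
    have hac : C.mul a c = some (C.D a) := by
      obtain ⟨v, hv⟩ := Option.isSome_iff_exists.mp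
        (C.const2 a (R a) b a c (Constellation.mul_R hR a) hc)
      obtain ⟨u, h3, h4⟩ := C.const1 a (R a) b c v hc hv
      rw [Constellation.mul_R hR a] at h3; injection h3 with h3; subst h3
      rw [hab] at h4; injection h4 with h4; subst h4
      exact hv
    -- D c = R a
    have hDc : C.D c = R a := by
      rw [Constellation.D_mul_left hc,
        Constellation.D_proj (Constellation.R_proj hR a)]
    -- R c = D a
    have hRc : R c = C.D a := by
      have := hcong a b (C.D a) c hab hc
      rw [Constellation.R_of_proj hR ⟨a, rfl⟩] at this
      exact this.symm
    -- c · D a = c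
    have h3 : C.mul c (C.D a) = some c := by
      rw [← hRc]; exact Constellation.mul_R hR c
    -- c · a exists, call it d
    obtain ⟨d, hd⟩ := Option.isSome_iff_exists.mp
      (C.const2 c (C.D a) a c a h3 (C.D_mul a))
    -- a · d = a
    have had : C.mul a d = some a := by
      obtain ⟨v, hv⟩ := Option.isSome_iff_exists.mp
        (C.const2 a c a (C.D a) d hac hd)
      obtain ⟨u, h4, h5⟩ := C.const1 a c a d v hd hv
      rw [hac] at h4; injection h4 with h4; subst h4
      rw [C.D_mul a] at h5; injection h5 with h5; subst h5
      exact hv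
    -- d · d = d
    have hdd : C.mul d d = some d := by
      obtain ⟨u, h4, h5⟩ := C.const1 c a d a d had hd
      rw [hd] at h4; injection h4 with h4; subst h4
      exact h5
    -- R a · d = d
    have hRad : C.mul (R a) d = some d := by
      have hDd : C.D d = R a := by rw [Constellation.D_mul_left hd, hDc]
      rw [← hDd]; exact C.D_mul d
    -- cancel: d = R a
    have hdR : d = R a := hcanc d (R a) d d hdd hRad
    exact ⟨c, hac, by rw [hd, hdR, hDc]⟩
  constructor
  · intro a
    obtain ⟨c, hc⟩ := hex a
    refine ⟨c, hc, fun t ht => ?_⟩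
    have h1 : C.mul t a = some (R a) := by rw [ht.2, hDinv_eq a t ht]
    have h2 : C.mul c a = some (R a) := by rw [hc.2, hDinv_eq a c hc]
    exact hcanc t c a (R a) h1 h2
  · intro s t ht
    exact (hDinv_eq s t ht).symm
end
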